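/- Assume uniform ellipticity: there is δ > 0 with vᵀΣv ≥ δ|v|² for all v ∈ ℝ^m. Then the functions (P₊,P₋) ↦ H*₊(P₊,P₋) and (P₊,P₋) ↦ H*₋(P₊,P₋) are real-valued on (0,∞)×(0,∞) and locally Lipschitz there: for every compact set K ⊂ (0,∞)×(0,∞) there is L > 0 such that |H*₊(P) − H*₊(P′)| ≤ L|P − P′| and |H*₋(P) − H*₋(P′)| ≤ L|P − P′| for all P, P′ ∈ K. -/

import Mathlib

/-!
For fixed `v`, `H₊(v, P₊, P₋)` is linear in `(P₊, P₋)`, so `H*₊` is concave as an infimum of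
linear functions. The jump integrand dominates `min(P₊, P₋) x²` with `x = v · β_j(e)`, so
ellipticity gives `H₊(v, P) ≥ min(P₊, P₋) δ |v|² + 2 P₊ μ · v ≥ -P₊² |μ|² / (min(P₊, P₋) δ)`.
Together with `H*₊ ≤ H₊(0, P) = 0` this bounds `H*₊` on every square `[a, b]²` with `a > 0`, and a
concave function bounded on a ball is Lipschitz on every smaller ball. Finally `H₋` is `H₊` for the
data `(-μ, -β)` with `P₊` and `P₋` exchanged.
-/

open MeasureTheory Set

/-- The Hamiltonian `H₊(v, P₊, P₋)` (time-invariant coefficients). -/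
noncomputable def Hplus {E : Type} [MeasurableSpace E] {m n ℓ : ℕ}
    (μ : Fin m → ℝ) (σ : Matrix (Fin m) (Fin n) ℝ)
    (ν : Fin ℓ → Measure E) (β : Fin ℓ → E → Fin m → ℝ)
    (v : Fin m → ℝ) (Pp Pm : ℝ) : ℝ :=
  Pp * ∑ k, (∑ i, σ i k * v i) ^ 2 + 2 * Pp * ∑ i, μ i * v i
    + ∑ j, ∫ e, (Pp * ((max (1 + ∑ i, v i * β j e i) 0) ^ 2
          - 1 - 2 * ∑ i, v i * β j e i)
        + Pm * (max (-(1 + ∑ i, v i * β j e i)) 0) ^ 2) ∂(ν j)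

/-- The Hamiltonian `H₋(v, P₊, P₋)` (time-invariant coefficients). -/
noncomputable def Hminus {E : Type} [MeasurableSpace E] {m n ℓ : ℕ}
    (μ : Fin m → ℝ) (σ : Matrix (Fin m) (Fin n) ℝ)
    (ν : Fin ℓ → Measure E) (β : Fin ℓ → E → Fin m → ℝ)
    (v : Fin m → ℝ) (Pp Pm : ℝ) : ℝ :=
  Pm * ∑ k, (∑ i, σ i k * v i) ^ 2 - 2 * Pm * ∑ i, μ i * v i
    + ∑ j, ∫ e, (Pm * ((max (1 - ∑ i, v i * β j e i) 0) ^ 2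
          - 1 + 2 * ∑ i, v i * β j e i)
        + Pp * (max (-(1 - ∑ i, v i * β j e i)) 0) ^ 2) ∂(ν j)

/-- `H*₊(P₊, P₋) = inf_{v ∈ ℝ^m₊} H₊(v, P₊, P₋)`. -/
noncomputable def HstarPlus {E : Type} [MeasurableSpace E] {m n ℓ : ℕ}
    (μ : Fin m → ℝ) (σ : Matrix (Fin m) (Fin n) ℝ)
    (ν : Fin ℓ → Measure E) (β : Fin ℓ → E → Fin m → ℝ)
    (Pp Pm : ℝ) : ℝ :=
  sInf ((fun v => Hplus μ σ ν β v Pp Pm) '' {v : Fin m → ℝ | ∀ i, 0 ≤ v i})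

/-- `H*₋(P₊, P₋) = inf_{v ∈ ℝ^m₊} H₋(v, P₊, P₋)`. -/
noncomputable def HstarMinus {E : Type} [MeasurableSpace E] {m n ℓ : ℕ}
    (μ : Fin m → ℝ) (σ : Matrix (Fin m) (Fin n) ℝ)
    (ν : Fin ℓ → Measure E) (β : Fin ℓ → E → Fin m → ℝ)
    (Pp Pm : ℝ) : ℝ :=
  sInf ((fun v => Hminus μ σ ν β v Pp Pm) '' {v : Fin m → ℝ | ∀ i, 0 ≤ v i})

/-- `Σ = σσᵀ + ∑_j ∫_E β_j(e) β_j(e)ᵀ ν_j(de)`, defined entrywise. -/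
noncomputable def SigmaMat {E : Type} [MeasurableSpace E] {m n ℓ : ℕ}
    (σ : Matrix (Fin m) (Fin n) ℝ) (ν : Fin ℓ → Measure E)
    (β : Fin ℓ → E → Fin m → ℝ) : Matrix (Fin m) (Fin m) ℝ :=
  Matrix.of fun i k => (∑ j', σ i j' * σ k j') + ∑ j, ∫ e, β j e i * β j e k ∂(ν j)

open Bornology Metric

theorem concaveOn_sInf_image {X ι : Type*} [AddCommMonoid X] [Module ℝ X] {s : Set X}
    {T : Set ι} (hT : T.Nonempty) (f : ι → X → ℝ) (hs : Convex ℝ s)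
    (hf : ∀ i ∈ T, ConcaveOn ℝ s (f i)) (hbdd : ∀ x ∈ s, BddBelow ((f · x) '' T)) :
    ConcaveOn ℝ s fun x => sInf ((f · x) '' T) := by
  refine ⟨hs, fun x hx y hy a b ha hb hab => le_csInf (hT.image _) ?_⟩
  rintro _ ⟨i, hi, rfl⟩
  calc a • sInf ((f · x) '' T) + b • sInf ((f · y) '' T) ≤ a • f i x + b • f i y := by
        simp only [smul_eq_mul]
        gcongr
        exacts [csInf_le (hbdd x hx) (mem_image_of_mem _ hi),
          csInf_le (hbdd y hy) (mem_image_of_mem _ hi)]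
    _ ≤ f i (a • x + b • y) := (hf i hi).2 hx hy ha hb hab

theorem IsCompact.exists_subset_Icc_prod_Icc {K : Set (ℝ × ℝ)} (hK : IsCompact K)
    (hKpos : K ⊆ Ioi 0 ×ˢ Ioi 0) : ∃ a b : ℝ, 0 < a ∧ K ⊆ Icc a b ×ˢ Icc a b := by
  obtain ⟨a, ha, hmin⟩ := hK.exists_forall_le' (continuous_fst.min continuous_snd).continuousOn
    fun P hP => lt_min (hKpos hP).1 (hKpos hP).2
  obtain ⟨b, hmax⟩ := hK.bddAbove_image (continuous_fst.max continuous_snd).continuousOn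
  refine ⟨a, b, ha, fun P hP => ?_⟩
  have hPa : a ≤ min P.1 P.2 := hmin P hP
  have hPb : max P.1 P.2 ≤ b := hmax (mem_image_of_mem _ hP)
  rw [le_min_iff] at hPa
  rw [max_le_iff] at hPb
  exact ⟨⟨hPa.1, hPb.1⟩, ⟨hPa.2, hPb.2⟩⟩

/-- Sup-norm balls in `ℝ × ℝ` are squares: `[a, b]²` lies in the ball of radius `b - a / 2` about
`(b, b)`, and the ball of radius `b - a / 4` lies in `[a / 4, 2 b]²`, where `f` is bounded. -/
theorem ConcaveOn.exists_lipschitzOnWith_Icc_prod_Icc {f : ℝ × ℝ → ℝ}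
    (hf : ConcaveOn ℝ (Ioi 0 ×ˢ Ioi 0) f)
    (hbdd : ∀ a b : ℝ, 0 < a → IsBounded (f '' Icc a b ×ˢ Icc a b)) {a b : ℝ} (ha : 0 < a) :
    ∃ K, LipschitzOnWith K f (Icc a b ×ˢ Icc a b) := by
  have hbox : Icc a b ×ˢ Icc a b ⊆ ball (b, b) (b - a / 2) := by
    rintro P ⟨⟨h1, h2⟩, h3, h4⟩
    simp only [mem_ball, Prod.dist_eq, Real.dist_eq, max_lt_iff, abs_sub_lt_iff]
    refine ⟨⟨?_, ?_⟩, ?_, ?_⟩ <;> linarith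
  have hball : ball (b, b) (b - a / 4) ⊆ Icc (a / 4) (2 * b) ×ˢ Icc (a / 4) (2 * b) := by
    intro P hP
    simp only [mem_ball, Prod.dist_eq, Real.dist_eq, max_lt_iff, abs_sub_lt_iff] at hP
    refine ⟨⟨?_, ?_⟩, ?_, ?_⟩ <;> linarith
  have hIcc : Icc (a / 4) (2 * b) ⊆ Ioi 0 := fun x hx => lt_of_lt_of_le (by positivity) hx.1
  obtain ⟨K, hK⟩ := ConcaveOn.exists_lipschitzOnWith_of_isBounded
    (hf.subset (hball.trans (prod_mono hIcc hIcc)) (convex_ball _ _))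
    (by linarith : b - a / 2 < b - a / 4) ((hbdd _ _ (by positivity)).subset (image_mono hball))
  exact ⟨K, hK.mono hbox⟩

theorem min_mul_sq_le_jump_integrand (x p q : ℝ) :
    min p q * x ^ 2 ≤ p * (max (1 + x) 0 ^ 2 - 1 - 2 * x) + q * max (-(1 + x)) 0 ^ 2 := by
  rcases le_total 0 (1 + x) with hx | hx
  · rw [max_eq_left hx, max_eq_right (by linarith)]
    nlinarith [min_le_left p q, sq_nonneg x]
  · rw [max_eq_right hx, max_eq_left (by linarith)]
    rcases le_total p q with hpq | hqp
    · rw [min_eq_left hpq]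
      nlinarith [mul_nonneg (sub_nonneg.2 hpq) (sq_nonneg (1 + x))]
    · rw [min_eq_right hqp]
      nlinarith [mul_nonneg (sub_nonneg.2 hqp) (show 0 ≤ -1 - 2 * x by linarith)]

/-- Completing the square coordinatewise: `c v² + 2 p μ v + p² μ² / c = (c v + p μ)² / c`. -/
theorem neg_div_le_mul_sum_sq_add_sum_mul {ι : Type*} [Fintype ι] (μ v : ι → ℝ) {c : ℝ}
    (hc : 0 < c) (p : ℝ) :
    -(p ^ 2 * (∑ i, μ i ^ 2) / c) ≤ c * ∑ i, v i ^ 2 + 2 * p * ∑ i, μ i * v i := by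
  have hterm : ∀ i, 0 ≤ c * v i ^ 2 + 2 * p * (μ i * v i) + p ^ 2 * μ i ^ 2 / c := fun i => by
    rw [show c * v i ^ 2 + 2 * p * (μ i * v i) + p ^ 2 * μ i ^ 2 / c
      = (c * v i + p * μ i) ^ 2 / c by field_simp; ring]
    positivity
  have := Finset.sum_nonneg fun i (_ : i ∈ Finset.univ) => hterm i
  simp only [Finset.sum_add_distrib, ← Finset.mul_sum, ← Finset.sum_div] at this
  linarith

theorem integrable_comp_of_abs_le {E : Type*} [MeasurableSpace E] {ν : Measure E}
    [IsFiniteMeasure ν] {f : E → ℝ} (hf : Measurable f) {D : ℝ} (hD : ∀ e, |f e| ≤ D)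
    {g : ℝ → ℝ} (hg : Continuous g) : Integrable (fun e => g (f e)) ν := by
  obtain ⟨C, hC⟩ := (isCompact_Icc (a := -D) (b := D)).exists_bound_of_continuousOn
    hg.continuousOn
  exact .of_bound (hg.measurable.comp hf).aestronglyMeasurable C
    (.of_forall fun e => hC _ (abs_le.1 (hD e)))

section Hamiltonian

variable {E : Type} [MeasurableSpace E] {m n ℓ : ℕ} (μ : Fin m → ℝ)
  (σ : Matrix (Fin m) (Fin n) ℝ) (ν : Fin ℓ → Measure E) {β : Fin ℓ → E → Fin m → ℝ}

theorem Hplus_zero (Pp Pm : ℝ) : Hplus μ σ ν β 0 Pp Pm = 0 := by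
  simp [Hplus]

theorem Hminus_eq_Hplus_neg (v : Fin m → ℝ) (Pp Pm : ℝ) :
    Hminus μ σ ν β v Pp Pm = Hplus (-μ) σ ν (-β) v Pm Pp := by
  simp only [Hminus, Hplus, Pi.neg_apply, mul_neg, neg_mul, Finset.sum_neg_distrib,
    ← sub_eq_add_neg, sub_neg_eq_add]

theorem HstarMinus_eq_HstarPlus_neg (Pp Pm : ℝ) :
    HstarMinus μ σ ν β Pp Pm = HstarPlus (-μ) σ ν (-β) Pm Pp := by
  simp only [HstarMinus, HstarPlus, Hminus_eq_Hplus_neg]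

theorem SigmaMat_neg : SigmaMat σ ν (-β) = SigmaMat σ ν β := by
  ext i k
  simp [SigmaMat]

variable [∀ j, IsFiniteMeasure (ν j)]

theorem integrable_comp_sum_mul (hβmeas : ∀ j, Measurable (β j))
    (hβbd : ∃ C, ∀ j e i, |β j e i| ≤ C) (j : Fin ℓ) (v : Fin m → ℝ) {g : ℝ → ℝ}
    (hg : Continuous g) : Integrable (fun e => g (∑ i, v i * β j e i)) (ν j) := by
  obtain ⟨C, hC⟩ := hβbd
  refine integrable_comp_of_abs_le (D := ∑ i, |v i| * C)
    (Finset.measurable_sum _ fun i _ => ((hβmeas j).eval).const_mul _) (fun e => ?_) hg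
  calc |∑ i, v i * β j e i| ≤ ∑ i, |v i * β j e i| := Finset.abs_sum_le_sum_abs _ _
    _ ≤ ∑ i, |v i| * C := Finset.sum_le_sum fun i _ => by
        rw [abs_mul]
        exact mul_le_mul_of_nonneg_left (hC j e i) (abs_nonneg _)

theorem Hplus_eq_mul_add_mul (hβmeas : ∀ j, Measurable (β j))
    (hβbd : ∃ C, ∀ j e i, |β j e i| ≤ C) (v : Fin m → ℝ) (Pp Pm : ℝ) :
    Hplus μ σ ν β v Pp Pm = Pp * Hplus μ σ ν β v 1 0 + Pm * Hplus μ σ ν β v 0 1 := by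
  have hint : ∀ j, ∫ e, (Pp * (max (1 + ∑ i, v i * β j e i) 0 ^ 2 - 1 - 2 * ∑ i, v i * β j e i)
        + Pm * max (-(1 + ∑ i, v i * β j e i)) 0 ^ 2) ∂(ν j)
      = Pp * ∫ e, (max (1 + ∑ i, v i * β j e i) 0 ^ 2 - 1 - 2 * ∑ i, v i * β j e i) ∂(ν j)
        + Pm * ∫ e, max (-(1 + ∑ i, v i * β j e i)) 0 ^ 2 ∂(ν j) := fun j => by
    have h₁ := integrable_comp_sum_mul ν hβmeas hβbd j v
      (g := fun x => max (1 + x) 0 ^ 2 - 1 - 2 * x) (by fun_prop)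
    have h₂ := integrable_comp_sum_mul ν hβmeas hβbd j v
      (g := fun x => max (-(1 + x)) 0 ^ 2) (by fun_prop)
    rw [integral_add (h₁.const_mul Pp) (h₂.const_mul Pm), integral_const_mul, integral_const_mul]
  simp only [Hplus, one_mul, zero_mul, add_zero, zero_add, hint, Finset.sum_add_distrib,
    ← Finset.mul_sum]
  ring

theorem concaveOn_Hplus (hβmeas : ∀ j, Measurable (β j))
    (hβbd : ∃ C, ∀ j e i, |β j e i| ≤ C) (v : Fin m → ℝ) {s : Set (ℝ × ℝ)} (hs : Convex ℝ s) :
    ConcaveOn ℝ s fun P => Hplus μ σ ν β v P.1 P.2 := by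
  refine ⟨hs, fun P _ Q _ a b _ _ _ => le_of_eq ?_⟩
  have h := Hplus_eq_mul_add_mul μ σ ν hβmeas hβbd v
  dsimp only
  rw [h P.1, h Q.1, h (a • P + b • Q).1]
  simp only [Prod.fst_add, Prod.snd_add, Prod.smul_fst, Prod.smul_snd, smul_eq_mul]
  ring

theorem sum_mul_SigmaMat_mul (hβmeas : ∀ j, Measurable (β j))
    (hβbd : ∃ C, ∀ j e i, |β j e i| ≤ C) (v : Fin m → ℝ) :
    ∑ i, ∑ k, v i * SigmaMat σ ν β i k * v k
      = ∑ k', (∑ i, σ i k' * v i) ^ 2 + ∑ j, ∫ e, (∑ i, v i * β j e i) ^ 2 ∂(ν j) := by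
  obtain ⟨C, hC⟩ := hβbd
  have hprod : ∀ j i k, Integrable (fun e => v i * β j e i * (v k * β j e k)) (ν j) :=
    fun j i k => .of_bound (by fun_prop (disch := exact (hβmeas j).eval)) (|v i| * C * (|v k| * C))
      (.of_forall fun e => by
        rw [Real.norm_eq_abs, abs_mul, abs_mul, abs_mul]
        have := (abs_nonneg _).trans (hC j e i)
        gcongr <;> exact hC j e _)
  simp only [SigmaMat, Matrix.of_apply, mul_add, add_mul, Finset.sum_add_distrib, sq,
    Finset.sum_mul_sum]
  congr 1
  · simp only [Finset.mul_sum, Finset.sum_mul]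
    conv_rhs => rw [Finset.sum_comm]; arg 2; ext i; rw [Finset.sum_comm]
    exact Finset.sum_congr rfl fun i _ => Finset.sum_congr rfl fun k _ =>
      Finset.sum_congr rfl fun j _ => by ring
  · simp only [Finset.mul_sum, Finset.sum_mul]
    conv_lhs => arg 2; ext i; rw [Finset.sum_comm]
    rw [Finset.sum_comm]
    refine Finset.sum_congr rfl fun j _ => ?_
    rw [integral_finsetSum _ fun i _ => integrable_finsetSum _ fun k _ => hprod j i k]
    refine Finset.sum_congr rfl fun i _ => ?_
    rw [integral_finsetSum _ fun k _ => hprod j i k]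
    refine Finset.sum_congr rfl fun k _ => ?_
    rw [← integral_const_mul, ← integral_mul_const]
    exact integral_congr_ae (.of_forall fun e => by ring)

theorem min_mul_sum_mul_SigmaMat_mul_add_le_Hplus (hβmeas : ∀ j, Measurable (β j))
    (hβbd : ∃ C, ∀ j e i, |β j e i| ≤ C) (v : Fin m → ℝ) (Pp Pm : ℝ) :
    min Pp Pm * ∑ i, ∑ k, v i * SigmaMat σ ν β i k * v k + 2 * Pp * ∑ i, μ i * v i
      ≤ Hplus μ σ ν β v Pp Pm := by
  have hσ : min Pp Pm * ∑ k, (∑ i, σ i k * v i) ^ 2 ≤ Pp * ∑ k, (∑ i, σ i k * v i) ^ 2 :=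
    mul_le_mul_of_nonneg_right (min_le_left _ _) (by positivity)
  have hjump : ∀ j, min Pp Pm * ∫ e, (∑ i, v i * β j e i) ^ 2 ∂(ν j)
      ≤ ∫ e, (Pp * (max (1 + ∑ i, v i * β j e i) 0 ^ 2 - 1 - 2 * ∑ i, v i * β j e i)
        + Pm * max (-(1 + ∑ i, v i * β j e i)) 0 ^ 2) ∂(ν j) := fun j => by
    rw [← integral_const_mul]
    exact integral_mono
      (integrable_comp_sum_mul ν hβmeas hβbd j v (g := fun x => min Pp Pm * x ^ 2) (by fun_prop))
      (integrable_comp_sum_mul ν hβmeas hβbd j v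
        (g := fun x => Pp * (max (1 + x) 0 ^ 2 - 1 - 2 * x) + Pm * max (-(1 + x)) 0 ^ 2)
        (by fun_prop))
      fun e => min_mul_sq_le_jump_integrand _ Pp Pm
  have := Finset.sum_le_sum fun j (_ : j ∈ Finset.univ) => hjump j
  rw [← Finset.mul_sum] at this
  rw [sum_mul_SigmaMat_mul σ ν hβmeas hβbd, mul_add]
  unfold Hplus
  linarith

theorem neg_div_le_Hplus (hβmeas : ∀ j, Measurable (β j))
    (hβbd : ∃ C, ∀ j e i, |β j e i| ≤ C) {δ : ℝ} (hδ : 0 < δ)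
    (hell : ∀ v : Fin m → ℝ, δ * ∑ i, v i ^ 2 ≤ ∑ i, ∑ k, v i * SigmaMat σ ν β i k * v k)
    (v : Fin m → ℝ) {Pp Pm : ℝ} (hPp : 0 < Pp) (hPm : 0 < Pm) :
    -(Pp ^ 2 * (∑ i, μ i ^ 2) / (min Pp Pm * δ)) ≤ Hplus μ σ ν β v Pp Pm :=
  calc -(Pp ^ 2 * (∑ i, μ i ^ 2) / (min Pp Pm * δ))
      ≤ min Pp Pm * δ * ∑ i, v i ^ 2 + 2 * Pp * ∑ i, μ i * v i :=
        neg_div_le_mul_sum_sq_add_sum_mul μ v (by positivity) Pp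
    _ ≤ min Pp Pm * ∑ i, ∑ k, v i * SigmaMat σ ν β i k * v k + 2 * Pp * ∑ i, μ i * v i := by
        rw [mul_assoc]
        gcongr
        exact hell v
    _ ≤ Hplus μ σ ν β v Pp Pm :=
        min_mul_sum_mul_SigmaMat_mul_add_le_Hplus μ σ ν hβmeas hβbd v Pp Pm

theorem bddBelow_Hplus_image (hβmeas : ∀ j, Measurable (β j))
    (hβbd : ∃ C, ∀ j e i, |β j e i| ≤ C) {δ : ℝ} (hδ : 0 < δ)
    (hell : ∀ v : Fin m → ℝ, δ * ∑ i, v i ^ 2 ≤ ∑ i, ∑ k, v i * SigmaMat σ ν β i k * v k)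
    {Pp Pm : ℝ} (hPp : 0 < Pp) (hPm : 0 < Pm) :
    BddBelow ((fun v => Hplus μ σ ν β v Pp Pm) '' {v : Fin m → ℝ | ∀ i, 0 ≤ v i}) :=
  ⟨_, forall_mem_image.2 fun v _ => neg_div_le_Hplus μ σ ν hβmeas hβbd hδ hell v hPp hPm⟩

theorem bddBelow_Hminus_image (hβmeas : ∀ j, Measurable (β j))
    (hβbd : ∃ C, ∀ j e i, |β j e i| ≤ C) {δ : ℝ} (hδ : 0 < δ)
    (hell : ∀ v : Fin m → ℝ, δ * ∑ i, v i ^ 2 ≤ ∑ i, ∑ k, v i * SigmaMat σ ν β i k * v k)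
    {Pp Pm : ℝ} (hPp : 0 < Pp) (hPm : 0 < Pm) :
    BddBelow ((fun v => Hminus μ σ ν β v Pp Pm) '' {v : Fin m → ℝ | ∀ i, 0 ≤ v i}) := by
  simpa only [Hminus_eq_Hplus_neg] using bddBelow_Hplus_image (-μ) σ ν (β := -β)
    (fun j => (hβmeas j).neg) (by simpa using hβbd) hδ (by simpa only [SigmaMat_neg]) hPm hPp

theorem isBounded_HstarPlus_image_Icc_prod_Icc (hβmeas : ∀ j, Measurable (β j))
    (hβbd : ∃ C, ∀ j e i, |β j e i| ≤ C) {δ : ℝ} (hδ : 0 < δ)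
    (hell : ∀ v : Fin m → ℝ, δ * ∑ i, v i ^ 2 ≤ ∑ i, ∑ k, v i * SigmaMat σ ν β i k * v k)
    {a b : ℝ} (ha : 0 < a) :
    IsBounded ((fun P : ℝ × ℝ => HstarPlus μ σ ν β P.1 P.2) '' Icc a b ×ˢ Icc a b) := by
  have hne : {v : Fin m → ℝ | ∀ i, 0 ≤ v i}.Nonempty := ⟨0, fun _ => le_rfl⟩
  refine isBounded_iff_bddBelow_bddAbove.2
    ⟨⟨-(b ^ 2 * (∑ i, μ i ^ 2) / (a * δ)), ?_⟩, ⟨0, ?_⟩⟩ <;>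
    rintro _ ⟨P, ⟨⟨hP₁a, hP₁b⟩, hP₂a, -⟩, rfl⟩ <;>
    have hP₁ : 0 < P.1 := ha.trans_le hP₁a <;>
    have hP₂ : 0 < P.2 := ha.trans_le hP₂a
  · refine le_csInf (hne.image _) ?_
    rintro _ ⟨v, -, rfl⟩
    refine le_trans ?_ (neg_div_le_Hplus μ σ ν hβmeas hβbd hδ hell v hP₁ hP₂)
    gcongr
    exact le_min hP₁a hP₂a
  · exact (csInf_le (bddBelow_Hplus_image μ σ ν hβmeas hβbd hδ hell hP₁ hP₂)
      ⟨0, fun _ => le_rfl, Hplus_zero μ σ ν _ _⟩)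

theorem concaveOn_HstarPlus (hβmeas : ∀ j, Measurable (β j))
    (hβbd : ∃ C, ∀ j e i, |β j e i| ≤ C) {δ : ℝ} (hδ : 0 < δ)
    (hell : ∀ v : Fin m → ℝ, δ * ∑ i, v i ^ 2 ≤ ∑ i, ∑ k, v i * SigmaMat σ ν β i k * v k) :
    ConcaveOn ℝ (Ioi 0 ×ˢ Ioi 0) fun P : ℝ × ℝ => HstarPlus μ σ ν β P.1 P.2 := by
  have hconvex : Convex ℝ (Ioi (0 : ℝ) ×ˢ Ioi (0 : ℝ)) := (convex_Ioi 0).prod (convex_Ioi 0)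
  unfold HstarPlus
  refine concaveOn_sInf_image (T := {v : Fin m → ℝ | ∀ i, 0 ≤ v i}) ⟨0, fun _ => le_rfl⟩
    (fun v (P : ℝ × ℝ) => Hplus μ σ ν β v P.1 P.2) hconvex ?_ ?_
  · exact fun v _ => concaveOn_Hplus μ σ ν hβmeas hβbd v hconvex
  · exact fun _ hP => bddBelow_Hplus_image μ σ ν hβmeas hβbd hδ hell hP.1 hP.2

theorem exists_lipschitzOnWith_HstarPlus (hβmeas : ∀ j, Measurable (β j))
    (hβbd : ∃ C, ∀ j e i, |β j e i| ≤ C) {δ : ℝ} (hδ : 0 < δ)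
    (hell : ∀ v : Fin m → ℝ, δ * ∑ i, v i ^ 2 ≤ ∑ i, ∑ k, v i * SigmaMat σ ν β i k * v k)
    {a b : ℝ} (ha : 0 < a) :
    ∃ K, LipschitzOnWith K (fun P : ℝ × ℝ => HstarPlus μ σ ν β P.1 P.2) (Icc a b ×ˢ Icc a b) :=
  (concaveOn_HstarPlus μ σ ν hβmeas hβbd hδ hell).exists_lipschitzOnWith_Icc_prod_Icc
    (fun _ _ ha => isBounded_HstarPlus_image_Icc_prod_Icc μ σ ν hβmeas hβbd hδ hell ha) ha

theorem exists_lipschitzOnWith_HstarMinus (hβmeas : ∀ j, Measurable (β j))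
    (hβbd : ∃ C, ∀ j e i, |β j e i| ≤ C) {δ : ℝ} (hδ : 0 < δ)
    (hell : ∀ v : Fin m → ℝ, δ * ∑ i, v i ^ 2 ≤ ∑ i, ∑ k, v i * SigmaMat σ ν β i k * v k)
    {a b : ℝ} (ha : 0 < a) :
    ∃ K, LipschitzOnWith K (fun P : ℝ × ℝ => HstarMinus μ σ ν β P.1 P.2) (Icc a b ×ˢ Icc a b) := by
  obtain ⟨K, hK⟩ := exists_lipschitzOnWith_HstarPlus (-μ) σ ν (β := -β)
    (fun j => (hβmeas j).neg) (by simpa using hβbd) hδ (by simpa only [SigmaMat_neg]) ha (b := b)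
  refine ⟨K, LipschitzOnWith.of_dist_le_mul fun P hP Q hQ => ?_⟩
  simpa only [HstarMinus_eq_HstarPlus_neg, Prod.dist_eq, Prod.fst_swap, Prod.snd_swap,
    max_comm (dist P.1 Q.1)] using
    hK.dist_le_mul P.swap ⟨hP.2, hP.1⟩ Q.swap ⟨hQ.2, hQ.1⟩

end Hamiltonian

theorem stmt11_general {E : Type} [MeasurableSpace E] {m n ℓ : ℕ}
    (μ : Fin m → ℝ) (σ : Matrix (Fin m) (Fin n) ℝ)
    (ν : Fin ℓ → Measure E) [∀ j, IsFiniteMeasure (ν j)]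
    (β : Fin ℓ → E → Fin m → ℝ)
    (hβmeas : ∀ j, Measurable (β j))
    (hβbd : ∃ C, ∀ j e i, |β j e i| ≤ C)
    (δ : ℝ) (hδ : 0 < δ)
    (hell : ∀ v : Fin m → ℝ,
      δ * ∑ i, v i ^ 2 ≤ ∑ i, ∑ k, v i * SigmaMat σ ν β i k * v k) :
    (∀ Pp Pm : ℝ, 0 < Pp → 0 < Pm →
      BddBelow ((fun v => Hplus μ σ ν β v Pp Pm) '' {v : Fin m → ℝ | ∀ i, 0 ≤ v i}) ∧
      BddBelow ((fun v => Hminus μ σ ν β v Pp Pm) '' {v : Fin m → ℝ | ∀ i, 0 ≤ v i})) ∧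
    (∀ K : Set (ℝ × ℝ), K ⊆ Ioi (0:ℝ) ×ˢ Ioi (0:ℝ) → IsCompact K →
      ∃ L > (0:ℝ), ∀ P ∈ K, ∀ P' ∈ K,
        |HstarPlus μ σ ν β P.1 P.2 - HstarPlus μ σ ν β P'.1 P'.2| ≤ L * ‖P - P'‖ ∧
        |HstarMinus μ σ ν β P.1 P.2 - HstarMinus μ σ ν β P'.1 P'.2| ≤ L * ‖P - P'‖) := by
  refine ⟨fun Pp Pm hPp hPm => ⟨bddBelow_Hplus_image μ σ ν hβmeas hβbd hδ hell hPp hPm,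
    bddBelow_Hminus_image μ σ ν hβmeas hβbd hδ hell hPp hPm⟩, fun K hK hKc => ?_⟩
  obtain ⟨a, b, ha, hKab⟩ := hKc.exists_subset_Icc_prod_Icc hK
  obtain ⟨L₁, hL₁⟩ := exists_lipschitzOnWith_HstarPlus μ σ ν hβmeas hβbd hδ hell ha (b := b)
  obtain ⟨L₂, hL₂⟩ := exists_lipschitzOnWith_HstarMinus μ σ ν hβmeas hβbd hδ hell ha (b := b)
  refine ⟨L₁ + L₂ + 1, by positivity, fun P hP P' hP' => ⟨?_, ?_⟩⟩ <;>
    rw [← Real.dist_eq, ← dist_eq_norm]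
  · exact (hL₁.dist_le_mul P (hKab hP) P' (hKab hP')).trans
      (by gcongr; linarith [L₂.coe_nonneg])
  · exact (hL₂.dist_le_mul P (hKab hP) P' (hKab hP')).trans
      (by gcongr; linarith [L₁.coe_nonneg])

/-- `H*₊` and `H*₋` are genuinely (finitely) defined on `(0,∞)²` and
locally Lipschitz there. -/
theorem stmt11 {E : Type} [MeasurableSpace E] {m n ℓ : ℕ}
    (hm : 0 < m) (hn : 0 < n) (hl : 0 < ℓ)
    (μ : Fin m → ℝ) (σ : Matrix (Fin m) (Fin n) ℝ)
    (ν : Fin ℓ → Measure E) [∀ j, IsFiniteMeasure (ν j)]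
    (β : Fin ℓ → E → Fin m → ℝ)
    (hβmeas : ∀ j, Measurable (β j))
    (hβbd : ∃ C, ∀ j e i, |β j e i| ≤ C)
    (δ : ℝ) (hδ : 0 < δ)
    (hell : ∀ v : Fin m → ℝ,
      δ * ∑ i, v i ^ 2 ≤ ∑ i, ∑ k, v i * SigmaMat σ ν β i k * v k) :
    (∀ Pp Pm : ℝ, 0 < Pp → 0 < Pm →
      BddBelow ((fun v => Hplus μ σ ν β v Pp Pm) '' {v : Fin m → ℝ | ∀ i, 0 ≤ v i}) ∧
      BddBelow ((fun v => Hminus μ σ ν β v Pp Pm) '' {v : Fin m → ℝ | ∀ i, 0 ≤ v i})) ∧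
    (∀ K : Set (ℝ × ℝ), K ⊆ Ioi (0:ℝ) ×ˢ Ioi (0:ℝ) → IsCompact K →
      ∃ L > (0:ℝ), ∀ P ∈ K, ∀ P' ∈ K,
        |HstarPlus μ σ ν β P.1 P.2 - HstarPlus μ σ ν β P'.1 P'.2| ≤ L * ‖P - P'‖ ∧
        |HstarMinus μ σ ν β P.1 P.2 - HstarMinus μ σ ν β P'.1 P'.2| ≤ L * ‖P - P'‖) :=
  stmt11_general μ σ ν β hβmeas hβbd δ hδ hell
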